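/- arXiv:2401.17502 — 2 statements merged into one kernel-verified Lean document; each statement's English description precedes it below -/
import Mathlib

section
/- Let k ≥ 1, l ≥ 1 be integers and n = 2^k. Then for every s with 1 ≤ s ≤ 2^k, the Ducci coefficients satisfy a_{l·2^{k−1}, s} + a_{l·2^{k−1}, s−2^{k−1}} ≡ 0 (mod 2^l), where the second index is read modulo n. -/
/-- The Ducci coefficients `a_{r,s}`, with second index read modulo `n`:
`a_{0,1} = 1`, `a_{0,s} = 0` for `s ≠ 1`, and `a_{r,s} = a_{r-1,s} + a_{r-1,s-1}`. -/
def ducciCoeff (n : ℕ) : ℕ → ZMod n → ℕ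
  | 0, s => if s = 1 then 1 else 0
  | r + 1, s => ducciCoeff n r s + ducciCoeff n r (s - 1)

/-- Composition formula: `a_{t+r,s} = ∑_j C(t,j) a_{r,s-j}`. -/
lemma ducciCoeff_add (n : ℕ) : ∀ (t r : ℕ) (s : ZMod n),
    ducciCoeff n (t + r) s =
      ∑ j ∈ Finset.range (t + 1), t.choose j * ducciCoeff n r (s - (j : ZMod n)) := by
  intro t
  induction t with
  | zero => intro r s; simp
  | succ t ih =>
    intro r s
    have h1 : t + 1 + r = t + (r + 1) := by omega
    rw [h1, ih (r + 1) s]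
    have h2 : ∀ x : ZMod n, ducciCoeff n (r + 1) x
        = ducciCoeff n r x + ducciCoeff n r (x - 1) := fun x => rfl
    simp only [h2, Nat.mul_add]
    rw [Finset.sum_add_distrib]
    rw [Finset.sum_range_succ' (fun j => (t+1).choose j * ducciCoeff n r (s - (j : ZMod n))) (t+1)]
    simp only [Nat.choose_succ_succ, Nat.add_mul]
    rw [Finset.sum_add_distrib]
    have h3 : ∑ j ∈ Finset.range (t + 1),
        t.choose (j+1) * ducciCoeff n r (s - ((j+1 : ℕ) : ZMod n))
        + t.choose 0 * ducciCoeff n r (s - ((0:ℕ) : ZMod n))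
        = ∑ j ∈ Finset.range (t + 2), t.choose j * ducciCoeff n r (s - (j : ZMod n)) := by
      rw [Finset.sum_range_succ' (fun j => t.choose j * ducciCoeff n r (s - (j : ZMod n))) (t+1)]
    have hc : ∀ x : ℕ, s - (x : ZMod n) - 1 = s - ((x + 1 : ℕ) : ZMod n) := by
      intro x; push_cast; ring
    simp only [hc, Nat.choose_zero_right, one_mul, Nat.succ_eq_add_one] at h3 ⊢
    rw [Finset.sum_range_succ (fun j => t.choose j * ducciCoeff n r (s - (j : ZMod n))) (t+1)] at h3
    simp only [Nat.choose_succ_self, zero_mul, add_zero] at h3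
    omega

/-- Key divisibility: `2^l ∣ a_{l·2^(k-1), s} + a_{l·2^(k-1), s - 2^(k-1)}`. -/
lemma key (k : ℕ) (hk : 1 ≤ k) : ∀ (l : ℕ) (s : ZMod (2 ^ k)),
    2 ^ l ∣ ducciCoeff (2 ^ k) (l * 2 ^ (k - 1)) s +
      ducciCoeff (2 ^ k) (l * 2 ^ (k - 1)) (s - ((2 ^ (k - 1) : ℕ) : ZMod (2 ^ k))) := by
  set m := 2 ^ (k - 1) with hm
  have hmm : (m : ℕ) + m = 2 ^ k := by
    rw [hm, ← two_mul, ← pow_succ']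
    congr 1; omega
  have hzero : ((m : ℕ) : ZMod (2 ^ k)) + ((m : ℕ) : ZMod (2 ^ k)) = 0 := by
    rw [← Nat.cast_add, hmm, ZMod.natCast_self]
  intro l
  induction l with
  | zero => intro s; simp
  | succ l ih =>
    intro s
    have hstep : (l + 1) * m = m + l * m := by ring
    rw [hstep, ducciCoeff_add, ducciCoeff_add]
    have hsub : ∀ j : ℕ, s - ((m : ℕ) : ZMod (2 ^ k)) - (j : ZMod (2 ^ k))
        = (s - (j : ZMod (2 ^ k))) - ((m : ℕ) : ZMod (2 ^ k)) := by intro j; ring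
    simp only [hsub]
    rw [← Finset.sum_add_distrib]
    simp only [← Nat.mul_add]
    set g : ZMod (2 ^ k) → ℕ := fun x => ducciCoeff (2 ^ k) (l * m) x +
      ducciCoeff (2 ^ k) (l * m) (x - ((m : ℕ) : ZMod (2 ^ k))) with hg
    have hginv : ∀ x, g (x - ((m : ℕ) : ZMod (2 ^ k))) = g x := by
      intro x
      have : x - ((m : ℕ) : ZMod (2 ^ k)) - ((m : ℕ) : ZMod (2 ^ k)) = x := by
        rw [sub_sub, hzero, sub_zero]
      simp only [hg, this]
      exact Nat.add_comm _ _
    rw [← ZMod.natCast_eq_zero_iff]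
    push_cast
    rw [Finset.sum_eq_add_of_mem 0 m (by simp) (by simp) (by positivity)
      (fun c hc hcc => ?_)]
    · -- boundary terms
      simp only [Nat.cast_zero, sub_zero, Nat.choose_zero_right, Nat.choose_self,
        Nat.cast_one, one_mul]
      obtain ⟨h, hh⟩ := ih s
      have hgm : ducciCoeff (2 ^ k) (l * m) (s - ((m : ℕ) : ZMod (2 ^ k))) +
          ducciCoeff (2 ^ k) (l * m) (s - ((m : ℕ) : ZMod (2 ^ k)) - ((m : ℕ) : ZMod (2 ^ k)))
          = 2 ^ l * h := by
        have h1 : g (s - ((m : ℕ) : ZMod (2 ^ k))) = g s := hginv s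
        simpa only [hg] using h1.trans hh
      rw [← Nat.cast_add, ← Nat.cast_add, ← Nat.cast_add, hh, hgm]
      have : 2 ^ l * h + 2 ^ l * h = 2 ^ (l + 1) * h := by ring
      rw [this, Nat.cast_mul, ZMod.natCast_self, zero_mul]
    · -- middle terms
      have h2c : 2 ∣ m.choose c := Nat.Prime.dvd_choose_pow Nat.prime_two hcc.1 hcc.2
      obtain ⟨d, hd⟩ := h2c
      obtain ⟨e, he⟩ := ih (s - (c : ZMod (2 ^ k)))
      rw [← Nat.cast_add, ← Nat.cast_mul]
      have : m.choose c * (ducciCoeff (2 ^ k) (l * m) (s - (c : ZMod (2 ^ k))) +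
          ducciCoeff (2 ^ k) (l * m) (s - (c : ZMod (2 ^ k)) - ((m : ℕ) : ZMod (2 ^ k))))
          = 2 ^ (l + 1) * (d * e) := by rw [hd, he]; ring
      rw [this, Nat.cast_mul, ZMod.natCast_self, zero_mul]

/-- For `n = 2^k` and `1 ≤ s ≤ 2^k`,
`a_{l·2^(k-1), s} + a_{l·2^(k-1), s - 2^(k-1)} ≡ 0 (mod 2^l)`. -/
theorem ducciCoeff_pair_sum (k l : ℕ) (hk : 1 ≤ k) (hl : 1 ≤ l)
    (s : ℕ) (hs1 : 1 ≤ s) (hs2 : s ≤ 2 ^ k) :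
    ducciCoeff (2 ^ k) (l * 2 ^ (k - 1)) (s : ZMod (2 ^ k)) +
      ducciCoeff (2 ^ k) (l * 2 ^ (k - 1))
        ((s : ZMod (2 ^ k)) - ((2 ^ (k - 1) : ℕ) : ZMod (2 ^ k))) ≡ 0 [MOD 2 ^ l] := by
  rw [Nat.modEq_zero_iff_dvd]
  exact key k hk l (s : ZMod (2 ^ k))
end

section
/- Let k ≥ 2 and l ≥ 2 be integers and n = 2^k. Then the Ducci coefficient satisfies a_{(l+1)·2^{k−1}−1, l·2^{k−2}+1} ≡ 2^{l−1} (mod 2^l), where the second index is read modulo n; in particular this coefficient is not divisible by 2^l, so D^{(l+1)·2^{k−1}−1}(0,…,0,1) ≠ (0,…,0) in (ZMod 2^l)^{2^k}. -/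
/-- The Ducci map on `(ZMod m)^n` with cyclic indexing:
`D(x_1,…,x_n) = (x_1+x_2, x_2+x_3, …, x_n+x_1)`. -/
def ducci (n m : ℕ) (x : Fin n → ZMod m) : Fin n → ZMod m :=
  fun i => x i + x ⟨(i.val + 1) % n, Nat.mod_lt _ i.pos⟩

/-!
The Ducci coefficients `a_{r,s}` are the coefficients of `(1 + X)^r * X` in the group algebra
`(ZMod 2^l)[ZMod 2^k]`, where `X` is the generator. Let `h = 2^(k-1)`, `T = X^h` (so `T^2 = 1`)
and `J = ∑ X^t`. Modulo 2 we have `(1 + X)^(2^j) ≡ 1 + X^(2^j)`, hence `(1 + X)^h ≡ 1 + T` and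
`(1 + X)^(2h-1) ≡ ∏_{j<k} (1 + X^(2^j)) = J`; squaring `(1 + X)^(h/2) ≡ 1 + X^(h/2)` gives
`(1 + X)^h = 1 + T + 2E` with `E ≡ X^(h/2)`. As `(1 + T)^c = 2^(c-1) (1 + T)`, the binomial
theorem makes `(1 + X)^(hl)` equal to `2^(l-1)` times `1 + T` times a polynomial in `E`, so
`(1 + X)^((l+1)h - 1)` is `2^(l-1)` times an element that only matters modulo 2. Modulo 2 that
element is `J` times an odd integer, because `J` absorbs every power of `X`. Hence
`(1 + X)^r * X = 2^(l-1) J`: all coefficients are `2^(l-1)`.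
-/

open Finset AddMonoidAlgebra

section Ring

variable {S : Type*} [Ring S] {x : S} {N : ℕ}

theorem geom_sum_mul_self_of_pow_eq_one (hx : x ^ N = 1) :
    (∑ t ∈ range N, x ^ t) * x = ∑ t ∈ range N, x ^ t := by
  have h := geom_sum_mul x N
  rwa [hx, sub_self, mul_sub, mul_one, sub_eq_zero] at h

theorem geom_sum_mul_pow_of_pow_eq_one (hx : x ^ N = 1) (c : ℕ) :
    (∑ t ∈ range N, x ^ t) * x ^ c = ∑ t ∈ range N, x ^ t := by
  induction c with
  | zero => rw [pow_zero, mul_one]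
  | succ c ih => rw [pow_succ, ← mul_assoc, ih, geom_sum_mul_self_of_pow_eq_one hx]

end Ring

section CommRing

variable {S : Type*} [CommRing S]

theorem exists_eq_add_two_mul_of_mk_eq {x y : S}
    (h : Ideal.Quotient.mk (Ideal.span {2}) x = Ideal.Quotient.mk (Ideal.span {2}) y) :
    ∃ d, x = y + 2 * d := by
  obtain ⟨d, hd⟩ := Ideal.mem_span_singleton'.mp (Ideal.Quotient.eq.mp h)
  exact ⟨d, by linear_combination -hd⟩

theorem two_pow_pred_mul_eq_of_mk_eq {l : ℕ} (hl : 1 ≤ l) (h2 : (2 : S) ^ l = 0) {x y : S}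
    (h : Ideal.Quotient.mk (Ideal.span {2}) x = Ideal.Quotient.mk (Ideal.span {2}) y) :
    2 ^ (l - 1) * x = 2 ^ (l - 1) * y := by
  obtain ⟨d, rfl⟩ := exists_eq_add_two_mul_of_mk_eq h
  obtain ⟨l, rfl⟩ := Nat.exists_eq_add_of_le' hl
  rw [Nat.add_sub_cancel]
  linear_combination d * h2

theorem exists_sq_eq_one_add_sq_add_two_mul {u y : S}
    (h : Ideal.Quotient.mk (Ideal.span {2}) u = Ideal.Quotient.mk (Ideal.span {2}) (1 + y)) :
    ∃ E, u ^ 2 = 1 + y ^ 2 + 2 * E ∧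
      Ideal.Quotient.mk (Ideal.span {2}) E = Ideal.Quotient.mk (Ideal.span {2}) y := by
  obtain ⟨d, rfl⟩ := exists_eq_add_two_mul_of_mk_eq h
  refine ⟨y + 2 * (d * (1 + y) + d ^ 2), by ring, ?_⟩
  simp [Ideal.Quotient.mk_singleton_self]

theorem add_pow_two_pow_of_two_eq_zero (h : (2 : S) = 0) (a b : S) (j : ℕ) :
    (a + b) ^ 2 ^ j = a ^ 2 ^ j + b ^ 2 ^ j := by
  induction j with
  | zero => simp
  | succ j ih =>
    rw [pow_succ, pow_mul, ih]
    linear_combination (a ^ 2 ^ j * b ^ 2 ^ j) * h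

theorem one_add_pow_two_pow_sub_one_of_two_eq_zero (h : (2 : S) = 0) (x : S) (j : ℕ) :
    (1 + x) ^ (2 ^ j - 1) = ∑ t ∈ range (2 ^ j), x ^ t := by
  induction j with
  | zero => simp
  | succ j ih =>
    have hsplit : 2 ^ (j + 1) - 1 = (2 ^ j - 1) + 2 ^ j := by
      have := Nat.one_le_two_pow (n := j); rw [pow_succ]; omega
    rw [hsplit, pow_add, ih, add_pow_two_pow_of_two_eq_zero h, one_pow, pow_succ, mul_two,
      sum_range_add, mul_add, mul_one, sum_mul]
    simp only [← pow_add, Nat.add_comm]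

theorem sum_range_choose_succ_eq_one_of_two_eq_zero (h : (2 : S) = 0) {l : ℕ} (hl : 1 ≤ l) :
    ∑ c ∈ range l, (l.choose (c + 1) : S) = 1 := by
  have hsum := Nat.sum_range_choose l
  rw [sum_range_succ', Nat.choose_zero_right] at hsum
  have hcast := congrArg (Nat.cast : ℕ → S) hsum
  push_cast at hcast
  obtain ⟨l, rfl⟩ := Nat.exists_eq_add_of_le' hl
  linear_combination hcast + ((2 : S) ^ l - 1) * h

theorem mul_sum_choose_succ_mul_pow_of_two_eq_zero (h : (2 : S) = 0) {l : ℕ} (hl : 1 ≤ l)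
    {J y : S} (hJ : ∀ j : ℕ, J * y ^ j = J) (e : ℕ → ℕ) :
    J * ∑ c ∈ range l, (l.choose (c + 1) : S) * y ^ e c = J := by
  simp only [mul_sum, mul_left_comm J, hJ, ← sum_mul,
    sum_range_choose_succ_eq_one_of_two_eq_zero h hl, one_mul]

theorem one_add_pow_succ_of_sq_eq_one {T : S} (hT : T ^ 2 = 1) (c : ℕ) :
    (1 + T) ^ (c + 1) = 2 ^ c * (1 + T) := by
  induction c with
  | zero => simp
  | succ c ih =>
    rw [pow_succ, ih]
    linear_combination (2 : S) ^ c * hT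

theorem one_add_add_two_mul_pow {T : S} (hT : T ^ 2 = 1) {l : ℕ} (h2 : (2 : S) ^ l = 0) (E : S) :
    (1 + T + 2 * E) ^ l
      = 2 ^ (l - 1) * ((1 + T) * ∑ c ∈ range l, (l.choose (c + 1) : S) * E ^ (l - 1 - c)) := by
  rw [add_pow, sum_range_succ', mul_sum, mul_sum]
  simp only [pow_zero, one_mul, Nat.choose_zero_right, Nat.cast_one, mul_one, mul_pow,
    Nat.sub_zero, h2, zero_mul, add_zero]
  refine sum_congr rfl fun c hc => ?_
  have hc : c < l := mem_range.mp hc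
  rw [one_add_pow_succ_of_sq_eq_one hT, show l - (c + 1) = l - 1 - c by omega]
  have h2c : (2 : S) ^ c * 2 ^ (l - 1 - c) = 2 ^ (l - 1) := by rw [← pow_add]; congr 1; omega
  linear_combination ((1 + T) * E ^ (l - 1 - c) * (l.choose (c + 1) : S)) * h2c

theorem one_add_pow_eq_two_pow_mul_geom_sum {k l : ℕ} (hk : 2 ≤ k) (hl : 1 ≤ l)
    (h2 : (2 : S) ^ l = 0) {x : S} (hx : x ^ 2 ^ k = 1) :
    (1 + x) ^ ((l + 1) * 2 ^ (k - 1) - 1) = 2 ^ (l - 1) * ∑ t ∈ range (2 ^ k), x ^ t := by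
  obtain ⟨a, rfl⟩ : ∃ a, k = a + 2 := ⟨k - 2, by omega⟩
  set π := Ideal.Quotient.mk (Ideal.span {(2 : S)})
  have hπ2 : π 2 = 0 := Ideal.Quotient.mk_singleton_self 2
  set J := ∑ t ∈ range (2 ^ (a + 2)), x ^ t
  have hfrob (j : ℕ) : π ((1 + x) ^ 2 ^ j) = π (1 + x ^ 2 ^ j) := by
    simpa only [map_pow, map_add, map_one, one_pow] using
      add_pow_two_pow_of_two_eq_zero hπ2 1 (π x) j
  obtain ⟨E, hE, hEx⟩ := exists_sq_eq_one_add_sq_add_two_mul (hfrob a)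
  rw [← pow_mul, ← pow_mul, ← pow_succ] at hE
  have hT : (x ^ 2 ^ (a + 1)) ^ 2 = 1 := by rw [← pow_mul, ← pow_succ, hx]
  have hexp : (l + 1) * 2 ^ (a + 2 - 1) - 1 = 2 ^ (a + 1) * l + (2 ^ (a + 1) - 1) := by
    have := Nat.one_le_two_pow (n := a + 1)
    rw [show a + 2 - 1 = a + 1 from rfl, add_mul, one_mul, Nat.add_sub_assoc this, mul_comm]
  rw [hexp, pow_add, pow_mul, hE, one_add_add_two_mul_pow hT h2, mul_assoc]
  apply two_pow_pred_mul_eq_of_mk_eq hl h2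
  change π E = π (x ^ 2 ^ a) at hEx
  have hJ (j : ℕ) : π J * π E ^ j = π J := by
    rw [hEx, ← map_pow, ← map_mul, ← pow_mul, geom_sum_mul_pow_of_pow_eq_one hx]
  have hgeom : π ((1 + x) ^ 2 ^ (a + 1)) * π ((1 + x) ^ (2 ^ (a + 1) - 1)) = π J := by
    rw [← map_mul, ← pow_add, show 2 ^ (a + 1) + (2 ^ (a + 1) - 1) = 2 ^ (a + 2) - 1 by
      have := Nat.one_le_two_pow (n := a + 1); rw [pow_succ 2 (a + 1)]; omega]
    simpa only [J, map_pow, map_add, map_one, map_sum] using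
      one_add_pow_two_pow_sub_one_of_two_eq_zero hπ2 (π x) (a + 2)
  calc π ((1 + x ^ 2 ^ (a + 1)) * (∑ c ∈ range l, (l.choose (c + 1) : S) * E ^ (l - 1 - c))
          * (1 + x) ^ (2 ^ (a + 1) - 1))
      = π J * ∑ c ∈ range l,
          (l.choose (c + 1) : S ⧸ Ideal.span {(2 : S)}) * π E ^ (l - 1 - c) := by
        rw [map_mul, map_mul, ← hfrob, mul_right_comm, hgeom]
        simp only [map_sum, map_mul, map_natCast, map_pow]
    _ = π J := mul_sum_choose_succ_mul_pow_of_two_eq_zero hπ2 hl hJ _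

end CommRing

section GroupAlgebra

variable {R : Type*} [CommSemiring R] {N : ℕ}

theorem ducciCoeff_cast_eq_coeff (r : ℕ) (s : ZMod N) :
    (ducciCoeff N r s : R) = ((1 + single (1 : ZMod N) (1 : R)) ^ r * single 1 1).coeff s := by
  induction r generalizing s with
  | zero => simp [ducciCoeff, coeff_single, Finsupp.single_apply, eq_comm]
  | succ r ih =>
    rw [ducciCoeff, Nat.cast_add, ih, ih, pow_succ', mul_assoc, add_mul, one_mul, coeff_add,
      Finsupp.add_apply, coeff_single_mul_apply, one_mul, neg_add_eq_sub]

theorem single_one_pow (t : ℕ) : (single (1 : ZMod N) (1 : R)) ^ t = single (t : ZMod N) 1 := by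
  rw [single_pow, one_pow, nsmul_one]

theorem single_one_pow_self : (single (1 : ZMod N) (1 : R)) ^ N = 1 := by
  rw [single_one_pow, ZMod.natCast_self, one_def]

theorem coeff_natCast_mul_geom_sum [NeZero N] (n : ℕ) (s : ZMod N) :
    ((n : R[ZMod N]) * ∑ t ∈ range N, (single (1 : ZMod N) (1 : R)) ^ t).coeff s = n := by
  rw [natCast_def, coeff_single_mul_apply, neg_zero, zero_add]
  simp only [single_one_pow, coeff_sum, Finsupp.finsetSum_apply, coeff_single,
    Finsupp.single_apply]
  rw [sum_eq_single s.val, if_pos (ZMod.natCast_zmod_val s), mul_one]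
  · intro t ht hts
    rw [if_neg]
    rintro rfl
    exact hts (ZMod.val_cast_of_lt (mem_range.mp ht)).symm
  · exact fun h => absurd (mem_range.mpr (ZMod.val_lt s)) h

end GroupAlgebra

theorem ducci_iterate_apply (N M r : ℕ) (i : Fin N) :
    (ducci N M)^[r] (fun i : Fin N => if (i : ℕ) = N - 1 then (1 : ZMod M) else 0) i
      = (ducciCoeff N r (-(i : ℕ)) : ZMod M) := by
  induction r generalizing i with
  | zero =>
    have : NeZero N := ⟨i.pos.ne'⟩
    have hlast : ((N - 1 : ℕ) : ZMod N) = -1 := by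
      rw [Nat.cast_pred i.pos, ZMod.natCast_self, zero_sub]
    have hiff : (i : ℕ) = N - 1 ↔ -((i : ℕ) : ZMod N) = 1 := by
      rw [neg_eq_iff_eq_neg, ← hlast, ZMod.natCast_eq_natCast_iff', Nat.mod_eq_of_lt i.2,
        Nat.mod_eq_of_lt (Nat.sub_lt i.pos one_pos)]
    simp [ducciCoeff, hiff]
  | succ r ih =>
    rw [Function.iterate_succ_apply', ducci, ih, ih, ducciCoeff, Nat.cast_add]
    congr 3
    rw [ZMod.natCast_mod]; push_cast; ring

/-- For `n = 2^k`, `k ≥ 2`, `l ≥ 2`: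
`a_{(l+1)·2^(k-1)-1, l·2^(k-2)+1} ≡ 2^(l-1) (mod 2^l)`, and in particular
`D^{(l+1)·2^(k-1)-1}(0,…,0,1) ≠ (0,…,0)` in `(ZMod 2^l)^(2^k)`. -/
theorem ducciCoeff_before_vanish (k l : ℕ) (hk : 2 ≤ k) (hl : 2 ≤ l) :
    ducciCoeff (2 ^ k) ((l + 1) * 2 ^ (k - 1) - 1)
        ((l * 2 ^ (k - 2) + 1 : ℕ) : ZMod (2 ^ k)) ≡ 2 ^ (l - 1) [MOD 2 ^ l] ∧
      (ducci (2 ^ k) (2 ^ l))^[(l + 1) * 2 ^ (k - 1) - 1]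
        (fun i : Fin (2 ^ k) => if (i : ℕ) = 2 ^ k - 1 then (1 : ZMod (2 ^ l)) else 0) ≠ 0 := by
  have : NeZero (2 ^ k) := ⟨by positivity⟩
  have h2 : (2 : (ZMod (2 ^ l))[ZMod (2 ^ k)]) ^ l = 0 := by
    have h : ((2 ^ l : ℕ) : (ZMod (2 ^ l))[ZMod (2 ^ k)]) = 0 := by
      rw [natCast_def, ZMod.natCast_self, single_zero]
    exact_mod_cast h
  have hcoeff (s : ZMod (2 ^ k)) :
      (ducciCoeff (2 ^ k) ((l + 1) * 2 ^ (k - 1) - 1) s : ZMod (2 ^ l)) = (2 ^ (l - 1) : ℕ) := by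
    rw [ducciCoeff_cast_eq_coeff, one_add_pow_eq_two_pow_mul_geom_sum hk (by omega) h2
      single_one_pow_self, mul_assoc, geom_sum_mul_self_of_pow_eq_one single_one_pow_self,
      ← coeff_natCast_mul_geom_sum _ s, Nat.cast_pow, Nat.cast_ofNat]
  refine ⟨(ZMod.natCast_eq_natCast_iff _ _ _).mp (hcoeff _), fun h => ?_⟩
  have h0 := congrFun h ⟨0, by positivity⟩
  rw [ducci_iterate_apply, hcoeff, Pi.zero_apply, ZMod.natCast_eq_zero_iff,
    Nat.pow_dvd_pow_iff_le_right one_lt_two] at h0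
  omega
end
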